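/- arXiv:2307.00695 — 5 statements merged into one kernel-verified Lean document; each statement's English description precedes it below -/
import Mathlib

section
/- Let k > 0 and T > 0. There exists exactly one quadruple of differentiable functions (a, b, c, d) : [0, T] → ℝ⁴ satisfying, for all t ∈ [0, T], the system a′(t) − 2a(t)² + k = 0, b′(t) − 2a(t)² + 4a(t)c(t) = 0, c′(t) − 4a(t)c(t) + k = 0, d′(t) + b(t) + 2c(t) = 0, together with the terminal conditions a(T) = b(T) = c(T) = d(T) = 0; it is given explicitly by a(t) = √(k/2)·(1 − e^{−2√(2k)(T−t)})/(1 + e^{−2√(2k)(T−t)}), c(t) = k·∫_t^T exp(−∫_t^s 4a(r) dr) ds, b(t) = ∫_t^T (4a(s)c(s) − 2a(s)²) ds, and d(t) = ∫_t^T (b(s) + 2c(s)) ds. -/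
open Set Real intervalIntegral MeasureTheory

/-- A Gronwall-type lemma: if `e` satisfies `e T = 0` and `|e'| ≤ L |e|` on `[0, T]`,
then `e = 0` on `[0, T]`. -/
lemma myGronwallZero {T L : ℝ} {e g : ℝ → ℝ}
    (hd : ∀ t ∈ Set.Icc (0:ℝ) T, HasDerivWithinAt e (g t) (Set.Icc 0 T) t)
    (hbound : ∀ t ∈ Set.Icc (0:ℝ) T, |g t| ≤ L * |e t|)
    (heT : e T = 0) :
    ∀ t ∈ Set.Icc (0:ℝ) T, e t = 0 := by
  set f : ℝ → ℝ := fun t => e (T - t) with hf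
  have hmap : ∀ t ∈ Icc (0:ℝ) T, T - t ∈ Icc (0:ℝ) T := by
    intro t ht; exact ⟨by linarith [ht.2], by linarith [ht.1]⟩
  have hfd : ∀ t ∈ Icc (0:ℝ) T, HasDerivWithinAt f (g (T - t) * (-1)) (Icc 0 T) t := by
    intro t ht
    exact HasDerivWithinAt.comp t (hd (T - t) (hmap t ht))
      (((hasDerivAt_id t).const_sub T).hasDerivWithinAt) (fun x hx => hmap x hx)
  have hfc : ContinuousOn f (Icc 0 T) := fun t ht => (hfd t ht).continuousWithinAt
  have key := norm_le_gronwallBound_of_norm_deriv_right_le (E := ℝ)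
    (f := f) (f' := fun t => g (T - t) * (-1)) (δ := 0) (K := L) (ε := 0) (a := 0) (b := T)
    hfc
    (fun x hx => (hfd x (Ico_subset_Icc_self hx)).mono_of_mem_nhdsWithin
      (Icc_mem_nhdsGE_of_mem hx))
    (by simp [hf, heT])
    (by
      intro x hx
      have := hbound (T - x) (hmap x (Ico_subset_Icc_self hx))
      simpa [abs_mul, Real.norm_eq_abs] using this)
  intro t ht
  have := key (T - t) (hmap t ht)
  rw [gronwallBound_ε0_δ0] at this
  have : |e (T - (T - t))| ≤ 0 := by simpa [Real.norm_eq_abs, hf] using this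
  simp only [sub_sub_cancel] at this
  exact abs_nonpos_iff.mp this ▸ (abs_eq_zero.mp (le_antisymm this (abs_nonneg _)))

/-- For `k, T > 0`, the quadruple of functions given explicitly by
`a(t) = √(k/2)·(1 − e^{−2√(2k)(T−t)})/(1 + e^{−2√(2k)(T−t)})`,
`c(t) = k·∫_t^T exp(−∫_t^s 4a(r) dr) ds`, `b(t) = ∫_t^T (4a(s)c(s) − 2a(s)²) ds`,
`d(t) = ∫_t^T (b(s) + 2c(s)) ds` is (on `[0, T]`) the unique differentiable solution of the
Riccati system `a′ − 2a² + k = 0`, `b′ − 2a² + 4ac = 0`, `c′ − 4ac + k = 0`,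
`d′ + b + 2c = 0` with terminal conditions `a(T) = b(T) = c(T) = d(T) = 0`. -/
theorem stmt11 (k T : ℝ) (hk : 0 < k) (hT : 0 < T)
    (a b c d : ℝ → ℝ)
    (ha : ∀ t, a t = Real.sqrt (k / 2)
      * (1 - Real.exp (-2 * Real.sqrt (2 * k) * (T - t)))
      / (1 + Real.exp (-2 * Real.sqrt (2 * k) * (T - t))))
    (hc : ∀ t, c t = k * ∫ s in t..T, Real.exp (-(∫ r in t..s, 4 * a r)))
    (hb : ∀ t, b t = ∫ s in t..T, (4 * a s * c s - 2 * a s ^ 2))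
    (hd : ∀ t, d t = ∫ s in t..T, (b s + 2 * c s)) :
    -- the explicit quadruple solves the Riccati system with the terminal conditions
    ((∀ t ∈ Set.Icc (0 : ℝ) T,
        HasDerivWithinAt a (2 * a t ^ 2 - k) (Set.Icc 0 T) t ∧
        HasDerivWithinAt b (2 * a t ^ 2 - 4 * a t * c t) (Set.Icc 0 T) t ∧
        HasDerivWithinAt c (4 * a t * c t - k) (Set.Icc 0 T) t ∧
        HasDerivWithinAt d (-(b t + 2 * c t)) (Set.Icc 0 T) t) ∧
      a T = 0 ∧ b T = 0 ∧ c T = 0 ∧ d T = 0)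
    ∧
    -- and every differentiable solution of the system coincides with it on `[0, T]`
    (∀ a' b' c' d' : ℝ → ℝ,
      ((∀ t ∈ Set.Icc (0 : ℝ) T,
          HasDerivWithinAt a' (2 * a' t ^ 2 - k) (Set.Icc 0 T) t ∧
          HasDerivWithinAt b' (2 * a' t ^ 2 - 4 * a' t * c' t) (Set.Icc 0 T) t ∧
          HasDerivWithinAt c' (4 * a' t * c' t - k) (Set.Icc 0 T) t ∧
          HasDerivWithinAt d' (-(b' t + 2 * c' t)) (Set.Icc 0 T) t) ∧
        a' T = 0 ∧ b' T = 0 ∧ c' T = 0 ∧ d' T = 0) →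
      ∀ t ∈ Set.Icc (0 : ℝ) T, a' t = a t ∧ b' t = b t ∧ c' t = c t ∧ d' t = d t) := by
  -- derivative of `a`
  have haD : ∀ t, HasDerivAt a (2 * a t ^ 2 - k) t := by
    intro t
    set m := Real.sqrt (2 * k) with hm
    set s := Real.sqrt (k / 2) with hs
    set E : ℝ → ℝ := fun t => Real.exp (-2 * m * (T - t)) with hE
    have hEpos : ∀ u, 0 < E u := fun u => Real.exp_pos _
    have hden : ∀ u, 1 + E u ≠ 0 := fun u => by positivity
    have haf : a = fun t => s * (1 - E t) / (1 + E t) := funext ha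
    have hEder : HasDerivAt E (E t * (2 * m)) t := by
      have h1 : HasDerivAt (fun u : ℝ => -2 * m * (T - u)) (2 * m) t := by
        have := ((hasDerivAt_id t).const_sub T).const_mul (-2 * m)
        simpa using this
      exact h1.exp
    have hnum : HasDerivAt (fun u => s * (1 - E u)) (s * (-(E t * (2 * m)))) t :=
      (hEder.const_sub 1).const_mul s
    have hdenD : HasDerivAt (fun u => 1 + E u) (E t * (2 * m)) t := by
      simpa using hEder.const_add 1
    have hder : HasDerivAt a
        ((s * (-(E t * (2 * m))) * (1 + E t) - s * (1 - E t) * (E t * (2 * m)))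
          / (1 + E t) ^ 2) t := by
      rw [haf]
      exact hnum.div hdenD (hden t)
    convert hder using 1
    have hs2 : s ^ 2 = k / 2 := Real.sq_sqrt (by positivity)
    have hms : m * s = k := by
      rw [hm, hs, ← Real.sqrt_mul (by positivity)]
      rw [show 2 * k * (k / 2) = k ^ 2 by ring, Real.sqrt_sq hk.le]
    have hepos : (0:ℝ) < Real.exp (-2 * m * (T - t)) := Real.exp_pos _
    rw [ha t]
    simp only [hE]
    generalize hg : Real.exp (-2 * m * (T - t)) = e at hepos ⊢
    have h1 : 1 + e ≠ 0 := by positivity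
    field_simp
    nlinarith [hs2, hms, hepos, sq_nonneg e, sq_nonneg (1 + e)]
  have hacont : Continuous a :=
    continuous_iff_continuousAt.mpr fun t => (haD t).continuousAt
  -- derivative and continuity of `c`
  have hcPair : (∀ t, HasDerivAt c (4 * a t * c t - k) t) ∧ Continuous c := by
    set G : ℝ → ℝ := fun t => ∫ r in (0:ℝ)..t, 4 * a r with hG
    have h4a : Continuous (fun r => 4 * a r) := continuous_const.mul hacont
    have hGder : ∀ t, HasDerivAt G (4 * a t) t := by
      intro t
      exact intervalIntegral.integral_hasDerivAt_right (h4a.intervalIntegrable _ _)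
        (h4a.stronglyMeasurableAtFilter _ _) h4a.continuousAt
    have hGcont : Continuous G := by
      rw [continuous_iff_continuousAt]; exact fun t => (hGder t).continuousAt
    have hsub : ∀ t s : ℝ, (∫ r in t..s, 4 * a r) = G s - G t := by
      intro t s
      rw [hG]
      rw [← intervalIntegral.integral_interval_sub_left (h4a.intervalIntegrable _ _)
        (h4a.intervalIntegrable _ _)]
    have hexpc : Continuous (fun s => Real.exp (-G s)) := (hGcont.neg).rexp
    set H : ℝ → ℝ := fun t => ∫ s in t..T, Real.exp (-G s) with hH
    have hHder : ∀ t, HasDerivAt H (-Real.exp (-G t)) t := by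
      intro t
      exact intervalIntegral.integral_hasDerivAt_left (hexpc.intervalIntegrable _ _)
        (hexpc.stronglyMeasurableAtFilter _ _) hexpc.continuousAt
    have hcf : c = fun t => k * Real.exp (G t) * H t := by
      funext t
      show c t = k * Real.exp (G t) * H t
      rw [hc t]
      have h2 : k * Real.exp (G t) * H t = k * ∫ s in t..T, Real.exp (G t) * Real.exp (-G s) := by
        rw [intervalIntegral.integral_const_mul]; ring
      rw [h2]
      congr 1
      apply intervalIntegral.integral_congr
      intro s _
      show Real.exp (-(∫ r in t..s, 4 * a r)) = Real.exp (G t) * Real.exp (-G s)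
      rw [hsub t s, ← Real.exp_add]
      congr 1
      ring
    constructor
    · intro t
      have hD : HasDerivAt (fun t => k * Real.exp (G t) * H t)
          ((k * (Real.exp (G t) * (4 * a t))) * H t
            + k * Real.exp (G t) * (-Real.exp (-G t))) t :=
        (((hGder t).exp).const_mul k).mul (hHder t)
      have hD2 : HasDerivAt c
          ((k * (Real.exp (G t) * (4 * a t))) * H t
            + k * Real.exp (G t) * (-Real.exp (-G t))) t :=
        hcf.symm ▸ hD
      convert hD2 using 1
      have hct : c t = k * Real.exp (G t) * H t := congrFun hcf t
      have hkey : Real.exp (G t) * Real.exp (-G t) = 1 := by rw [← Real.exp_add]; simp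
      rw [hct]
      linear_combination k * hkey
    · rw [hcf]
      exact (continuous_const.mul (hGcont.rexp)).mul
        (by rw [continuous_iff_continuousAt]; exact fun t => (hHder t).continuousAt)
  obtain ⟨hcD, hccont⟩ := hcPair
  -- derivative and continuity of `b`
  have hfb : Continuous (fun s => 4 * a s * c s - 2 * a s ^ 2) := by
    exact ((continuous_const.mul hacont).mul hccont).sub
      (continuous_const.mul (hacont.pow 2))
  have hbD : ∀ t, HasDerivAt b (2 * a t ^ 2 - 4 * a t * c t) t := by
    intro t
    have hD := intervalIntegral.integral_hasDerivAt_left (hfb.intervalIntegrable t T)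
      (hfb.stronglyMeasurableAtFilter _ _) hfb.continuousAt
    have hbf : b = fun t => ∫ s in t..T, (4 * a s * c s - 2 * a s ^ 2) := funext hb
    rw [hbf]
    convert hD using 1
    · rfl
    · rfl
    · ring
  have hbcont : Continuous b :=
    continuous_iff_continuousAt.mpr fun t => (hbD t).continuousAt
  -- derivative of `d`
  have hfd2 : Continuous (fun s => b s + 2 * c s) :=
    hbcont.add (continuous_const.mul hccont)
  have hdD : ∀ t, HasDerivAt d (-(b t + 2 * c t)) t := by
    intro t
    have hD := intervalIntegral.integral_hasDerivAt_left (hfd2.intervalIntegrable t T)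
      (hfd2.stronglyMeasurableAtFilter _ _) hfd2.continuousAt
    have hdf : d = fun t => ∫ s in t..T, (b s + 2 * c s) := funext hd
    rw [hdf]
    exact hD
  -- terminal conditions
  have haT : a T = 0 := by rw [ha T]; simp
  have hbT : b T = 0 := by rw [hb T]; simp [intervalIntegral.integral_same]
  have hcT : c T = 0 := by rw [hc T]; simp [intervalIntegral.integral_same]
  have hdT : d T = 0 := by rw [hd T]; simp [intervalIntegral.integral_same]
  refine ⟨⟨fun t ht => ⟨(haD t).hasDerivWithinAt, (hbD t).hasDerivWithinAt,
      (hcD t).hasDerivWithinAt, (hdD t).hasDerivWithinAt⟩, haT, hbT, hcT, hdT⟩, ?_⟩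
  -- uniqueness
  rintro a' b' c' d' ⟨hsys, haT', hbT', hcT', hdT'⟩
  have ha'c : ContinuousOn a' (Icc 0 T) := fun t ht => ((hsys t ht).1).continuousWithinAt
  have hc'c : ContinuousOn c' (Icc 0 T) := fun t ht => ((hsys t ht).2.2.1).continuousWithinAt
  -- a' = a
  obtain ⟨L₁, hL₁⟩ : ∃ C, ∀ t ∈ Icc (0:ℝ) T, ‖2 * (a' t + a t)‖ ≤ C :=
    isCompact_Icc.exists_bound_of_continuousOn
      (continuousOn_const.mul (ha'c.add hacont.continuousOn))
  have heqa : ∀ t ∈ Icc (0:ℝ) T, a' t - a t = 0 := by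
    apply myGronwallZero (L := L₁)
      (g := fun t => (2 * a' t ^ 2 - k) - (2 * a t ^ 2 - k))
    · intro t ht
      exact ((hsys t ht).1).sub ((haD t).hasDerivWithinAt)
    · intro t ht
      have h1 : (2 * a' t ^ 2 - k) - (2 * a t ^ 2 - k)
          = (2 * (a' t + a t)) * (a' t - a t) := by ring
      rw [h1, abs_mul]
      have := hL₁ t ht
      rw [Real.norm_eq_abs] at this
      exact mul_le_mul_of_nonneg_right this (abs_nonneg _)
    · rw [haT', haT]; ring
  have heqa' : ∀ t ∈ Icc (0:ℝ) T, a' t = a t := fun t ht => sub_eq_zero.mp (heqa t ht)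
  -- c' = c
  obtain ⟨L₂, hL₂⟩ : ∃ C, ∀ t ∈ Icc (0:ℝ) T, ‖4 * a t‖ ≤ C :=
    isCompact_Icc.exists_bound_of_continuousOn
      (continuousOn_const.mul hacont.continuousOn)
  have heqc : ∀ t ∈ Icc (0:ℝ) T, c' t - c t = 0 := by
    apply myGronwallZero (L := L₂)
      (g := fun t => (4 * a' t * c' t - k) - (4 * a t * c t - k))
    · intro t ht
      exact ((hsys t ht).2.2.1).sub ((hcD t).hasDerivWithinAt)
    · intro t ht
      have h1 : (4 * a' t * c' t - k) - (4 * a t * c t - k)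
          = (4 * a t) * (c' t - c t) := by rw [heqa' t ht]; ring
      rw [h1, abs_mul]
      have := hL₂ t ht
      rw [Real.norm_eq_abs] at this
      exact mul_le_mul_of_nonneg_right this (abs_nonneg _)
    · rw [hcT', hcT]; ring
  have heqc' : ∀ t ∈ Icc (0:ℝ) T, c' t = c t := fun t ht => sub_eq_zero.mp (heqc t ht)
  -- b' = b
  have heqb : ∀ t ∈ Icc (0:ℝ) T, b' t - b t = 0 := by
    apply myGronwallZero (L := 0)
      (g := fun t => (2 * a' t ^ 2 - 4 * a' t * c' t) - (2 * a t ^ 2 - 4 * a t * c t))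
    · intro t ht
      exact ((hsys t ht).2.1).sub ((hbD t).hasDerivWithinAt)
    · intro t ht
      have h1 : (2 * a' t ^ 2 - 4 * a' t * c' t) - (2 * a t ^ 2 - 4 * a t * c t) = 0 := by
        rw [heqa' t ht, heqc' t ht]; ring
      rw [h1]
      simp
    · rw [hbT', hbT]; ring
  have heqb' : ∀ t ∈ Icc (0:ℝ) T, b' t = b t := fun t ht => sub_eq_zero.mp (heqb t ht)
  -- d' = d
  have heqd : ∀ t ∈ Icc (0:ℝ) T, d' t - d t = 0 := by
    apply myGronwallZero (L := 0)
      (g := fun t => (-(b' t + 2 * c' t)) - (-(b t + 2 * c t)))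
    · intro t ht
      exact ((hsys t ht).2.2.2).sub ((hdD t).hasDerivWithinAt)
    · intro t ht
      have h1 : (-(b' t + 2 * c' t)) - (-(b t + 2 * c t)) = 0 := by
        rw [heqb' t ht, heqc' t ht]; ring
      rw [h1]
      simp
    · rw [hdT', hdT]; ring
  intro t ht
  exact ⟨heqa' t ht, heqb' t ht, heqc' t ht, sub_eq_zero.mp (heqd t ht)⟩
end

section
/- Let k > 0 and T > 0, and let (a, b, c, d, e, f, g) : [0, T] → ℝ⁷ be differentiable functions satisfying, for all t ∈ [0, T]: a′ − 2a² + k = 0, b′ − (1/2)g² − 4ab − 2bg − 2cg = 0, c′ − 4ac + k = 0, d′ − (1/2)e² − ef + 2c + 2a + b + g = 0, e′ − 2ae − eg = 0, f′ − eg − 2af − gf − 2be − 2ce = 0, g′ − 4ag − g² − 2k = 0, with terminal conditions a(T) = b(T) = c(T) = d(T) = e(T) = f(T) = g(T) = 0. Then g(t) = −2a(t), e(t) = 0, and f(t) = 0 for all t ∈ [0, T]. -/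
open Set Real


/-- For `k, T > 0`, if `(a, b, c, d, e, f, g)` are differentiable on `[0, T]` and satisfy
`a′ − 2a² + k = 0`, `b′ − (1/2)g² − 4ab − 2bg − 2cg = 0`, `c′ − 4ac + k = 0`,
`d′ − (1/2)e² − ef + 2c + 2a + b + g = 0`, `e′ − 2ae − eg = 0`,
`f′ − eg − 2af − gf − 2be − 2ce = 0`, `g′ − 4ag − g² − 2k = 0` with
`a(T) = b(T) = c(T) = d(T) = e(T) = f(T) = g(T) = 0`, then `g = −2a`, `e = 0` and `f = 0`
on `[0, T]`. -/
theorem stmt13 (k T : ℝ) (hk : 0 < k) (hT : 0 < T)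
    (a b c d e f g : ℝ → ℝ)
    (hab : ∀ t ∈ Set.Icc (0 : ℝ) T,
      HasDerivWithinAt a (2 * a t ^ 2 - k) (Set.Icc 0 T) t ∧
      HasDerivWithinAt b ((1/2) * g t ^ 2 + 4 * a t * b t + 2 * b t * g t + 2 * c t * g t)
        (Set.Icc 0 T) t ∧
      HasDerivWithinAt c (4 * a t * c t - k) (Set.Icc 0 T) t ∧
      HasDerivWithinAt d ((1/2) * e t ^ 2 + e t * f t - 2 * c t - 2 * a t - b t - g t)
        (Set.Icc 0 T) t ∧
      HasDerivWithinAt e (2 * a t * e t + e t * g t) (Set.Icc 0 T) t ∧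
      HasDerivWithinAt f (e t * g t + 2 * a t * f t + g t * f t + 2 * b t * e t
        + 2 * c t * e t) (Set.Icc 0 T) t ∧
      HasDerivWithinAt g (4 * a t * g t + g t ^ 2 + 2 * k) (Set.Icc 0 T) t)
    (haT : a T = 0) (hbT : b T = 0) (hcT : c T = 0) (hdT : d T = 0)
    (heT : e T = 0) (hfT : f T = 0) (hgT : g T = 0) :
    ∀ t ∈ Set.Icc (0 : ℝ) T, g t = -2 * a t ∧ e t = 0 ∧ f t = 0 := by
  set w : ℝ → ℝ := fun t => g t + 2 * a t with hw
  have hw' : ∀ t ∈ Icc (0:ℝ) T, HasDerivWithinAt w ((w t)^2) (Icc 0 T) t := by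
    intro t ht
    have := ((hab t ht).2.2.2.2.2.2).add (((hab t ht).1).const_mul 2)
    refine HasDerivWithinAt.congr_deriv this ?_
    simp only [hw]; ring
  have hwc : ContinuousOn w (Icc 0 T) := fun t ht => (hw' t ht).continuousWithinAt
  obtain ⟨C, hC⟩ := (isCompact_Icc (a := (0:ℝ)) (b := T)).exists_bound_of_continuousOn hwc
  set M : ℝ := max C 0 with hM
  have hM0 : 0 ≤ M := le_max_right _ _
  have hwM : ∀ t ∈ Icc (0:ℝ) T, w t ∈ Metric.closedBall (0:ℝ) M := by
    intro t ht
    simp only [Metric.mem_closedBall, dist_zero_right, Real.norm_eq_abs]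
    exact (hC t ht).trans (le_max_left _ _)
  have hv : ∀ t : ℝ, LipschitzOnWith (Real.toNNReal (2*M)) (fun x : ℝ => x^2)
      (Metric.closedBall (0:ℝ) M) := by
    intro t
    rw [lipschitzOnWith_iff_dist_le_mul]
    intro x hx y hy
    simp only [Metric.mem_closedBall, dist_zero_right, Real.norm_eq_abs] at hx hy
    rw [Real.dist_eq, Real.dist_eq, Real.coe_toNNReal _ (by positivity)]
    have h1 : x^2 - y^2 = (x + y) * (x - y) := by ring
    rw [h1, abs_mul]
    have h2 : |x + y| ≤ 2 * M := (abs_add_le _ _).trans (by linarith)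
    exact mul_le_mul_of_nonneg_right h2 (abs_nonneg _)
  -- membership of derivative-statement within Iic t
  have hmem : ∀ t ∈ Ioc (0:ℝ) T, Icc (0:ℝ) T ∈ nhdsWithin t (Iic t) := by
    intro t ht
    rw [mem_nhdsWithin]
    exact ⟨Ioi 0, isOpen_Ioi, ht.1, fun x hx => ⟨le_of_lt hx.1, hx.2.trans ht.2⟩⟩
  have hweq : EqOn w (fun _ => (0:ℝ)) (Icc 0 T) := by
    apply ODE_solution_unique_of_mem_Icc_left (v := fun _ x => x^2)
      (s := fun _ => Metric.closedBall (0:ℝ) M) (fun t _ => hv t) hwc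
    · intro t ht
      exact (hw' t ⟨ht.1.le, ht.2⟩).mono_of_mem_nhdsWithin (hmem t ht)
    · exact fun t ht => hwM t ⟨ht.1.le, ht.2⟩
    · exact continuousOn_const
    · intro t ht
      simpa using (hasDerivWithinAt_const t (Iic t) (0:ℝ))
    · intro t ht
      simpa [Metric.mem_closedBall] using hM0
    · simp [hw, haT, hgT]
  -- hence g = -2a on [0,T]
  have hga : ∀ t ∈ Icc (0:ℝ) T, g t = -2 * a t := by
    intro t ht
    have := hweq ht
    simp only [hw] at this
    linarith [this]
  -- e' = 0 on [0,T]
  have he' : ∀ t ∈ Icc (0:ℝ) T, HasDerivWithinAt e 0 (Icc 0 T) t := by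
    intro t ht
    have := (hab t ht).2.2.2.2.1
    rwa [hga t ht, show 2 * a t * e t + e t * (-2 * a t) = 0 by ring] at this
  have hmem2 : ∀ t ∈ Ico (0:ℝ) T, Icc (0:ℝ) T ∈ nhdsWithin t (Ici t) := by
    intro t ht
    rw [mem_nhdsWithin]
    exact ⟨Iio T, isOpen_Iio, ht.2, fun x hx => ⟨ht.1.trans hx.2, le_of_lt hx.1⟩⟩
  have hec : ContinuousOn e (Icc 0 T) := fun t ht => (he' t ht).continuousWithinAt
  have heconst := constant_of_has_deriv_right_zero hec (fun t ht =>
    (he' t ⟨ht.1, ht.2.le⟩).mono_of_mem_nhdsWithin (hmem2 t ht))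
  have he0 : ∀ t ∈ Icc (0:ℝ) T, e t = 0 := by
    intro t ht
    have h1 := heconst t ht
    have h2 := heconst T ⟨hT.le, le_refl T⟩
    rw [heT] at h2
    rw [h1, ← h2]
  -- f' = 0 on [0,T]
  have hf' : ∀ t ∈ Icc (0:ℝ) T, HasDerivWithinAt f 0 (Icc 0 T) t := by
    intro t ht
    have := (hab t ht).2.2.2.2.2.1
    rwa [hga t ht, he0 t ht, show (0:ℝ) * (-2 * a t) + 2 * a t * f t + (-2 * a t) * f t
      + 2 * b t * 0 + 2 * c t * 0 = 0 by ring] at this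
  have hfc : ContinuousOn f (Icc 0 T) := fun t ht => (hf' t ht).continuousWithinAt
  have hfconst := constant_of_has_deriv_right_zero hfc (fun t ht =>
    (hf' t ⟨ht.1, ht.2.le⟩).mono_of_mem_nhdsWithin (hmem2 t ht))
  intro t ht
  refine ⟨hga t ht, he0 t ht, ?_⟩
  have h1 := hfconst t ht
  have h2 := hfconst T ⟨hT.le, le_refl T⟩
  rw [hfT] at h2
  rw [h1, ← h2]
end

section
/- Let k > 0, T > 0, and let N ≥ 2 be an integer. Define a₁ : [0, T] → ℝ by a₁(t) = √( (k/2)·(N−1)²/(N(N+1)) ) · (1 − e^{−2√(2(N+1)k/N)(T−t)})/(1 + e^{−2√(2(N+1)k/N)(T−t)}). Then a₁ is differentiable, a₁(T) = 0, and a₁′(t) − (2(N+1)/(N−1))·a₁(t)² + ((N−1)/N)·k = 0 for every t ∈ [0, T]. -/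
/-- For `k, T > 0` and an integer `N ≥ 2`, the function
`a₁(t) = √((k/2)(N−1)²/(N(N+1)))·(1 − e^{−2√(2(N+1)k/N)(T−t)})/(1 + e^{−2√(2(N+1)k/N)(T−t)})`
is differentiable on `[0, T]`, satisfies `a₁(T) = 0`, and solves
`a₁′(t) − (2(N+1)/(N−1))a₁(t)² + ((N−1)/N)k = 0` on `[0, T]`. -/
theorem stmt14 (k T : ℝ) (hk : 0 < k) (hT : 0 < T) (N : ℕ) (hN : 2 ≤ N)
    (a₁ : ℝ → ℝ)
    (ha₁ : ∀ t, a₁ t = Real.sqrt ((k / 2) * ((N : ℝ) - 1) ^ 2 / ((N : ℝ) * ((N : ℝ) + 1)))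
      * (1 - Real.exp (-2 * Real.sqrt (2 * ((N : ℝ) + 1) * k / (N : ℝ)) * (T - t)))
      / (1 + Real.exp (-2 * Real.sqrt (2 * ((N : ℝ) + 1) * k / (N : ℝ)) * (T - t)))) :
    (∀ t ∈ Set.Icc (0 : ℝ) T, DifferentiableAt ℝ a₁ t) ∧ a₁ T = 0 ∧
      ∀ t ∈ Set.Icc (0 : ℝ) T,
        deriv a₁ t - (2 * ((N : ℝ) + 1) / ((N : ℝ) - 1)) * a₁ t ^ 2
          + (((N : ℝ) - 1) / (N : ℝ)) * k = 0 := by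
  have hN2 : (2:ℝ) ≤ (N:ℝ) := by exact_mod_cast hN
  have hNpos : (0:ℝ) < (N:ℝ) := by linarith
  have hN1 : (0:ℝ) < (N:ℝ) - 1 := by linarith
  have hNp1 : (0:ℝ) < (N:ℝ) + 1 := by linarith
  set β := Real.sqrt (2 * ((N:ℝ) + 1) * k / (N:ℝ)) with hβ
  set c := Real.sqrt ((k / 2) * ((N:ℝ) - 1) ^ 2 / ((N:ℝ) * ((N:ℝ) + 1))) with hc
  have hβc : β * c = k * ((N:ℝ) - 1) / (N:ℝ) := by
    rw [hβ, hc, ← Real.sqrt_mul (by positivity)]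
    rw [show (2 * ((N:ℝ) + 1) * k / (N:ℝ)) * ((k / 2) * ((N:ℝ) - 1) ^ 2 / ((N:ℝ) * ((N:ℝ) + 1)))
        = (k * ((N:ℝ) - 1) / (N:ℝ)) ^ 2 by field_simp]
    exact Real.sqrt_sq (by positivity)
  have hc2 : c ^ 2 = (k / 2) * ((N:ℝ) - 1) ^ 2 / ((N:ℝ) * ((N:ℝ) + 1)) :=
    Real.sq_sqrt (by positivity)
  have hE : ∀ t : ℝ, HasDerivAt (fun t => Real.exp (-2 * β * (T - t)))
      (2 * β * Real.exp (-2 * β * (T - t))) t := by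
    intro t
    have h1 : HasDerivAt (fun t : ℝ => -2 * β * (T - t)) (2 * β) t := by
      have := ((hasDerivAt_id t).const_sub T).const_mul (-2 * β)
      simpa using this
    have := h1.exp
    simpa [mul_comm] using this
  have key : ∀ t : ℝ, HasDerivAt a₁
      (-4 * β * c * Real.exp (-2 * β * (T - t)) / (1 + Real.exp (-2 * β * (T - t))) ^ 2) t := by
    intro t
    have hEpos : 0 < Real.exp (-2 * β * (T - t)) := Real.exp_pos _
    have hne : (1 + Real.exp (-2 * β * (T - t))) ≠ 0 := by positivity
    have hu : HasDerivAt (fun t => c * (1 - Real.exp (-2 * β * (T - t))))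
        (c * -(2 * β * Real.exp (-2 * β * (T - t)))) t := ((hE t).const_sub 1).const_mul c
    have hv : HasDerivAt (fun t => 1 + Real.exp (-2 * β * (T - t)))
        (2 * β * Real.exp (-2 * β * (T - t))) t := (hE t).const_add 1
    have hdiv := hu.div hv hne
    have heq : a₁ = fun t => c * (1 - Real.exp (-2 * β * (T - t)))
        / (1 + Real.exp (-2 * β * (T - t))) := by
      funext s; rw [ha₁ s]
    rw [heq]
    convert hdiv using 1
    · rfl
    · rfl
    · rfl
    ring
  refine ⟨fun t _ => (key t).differentiableAt, ?_, fun t _ => ?_⟩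
  · rw [ha₁]; simp
  · rw [(key t).deriv, ha₁ t]
    have hEpos : 0 < Real.exp (-2 * β * (T - t)) := Real.exp_pos _
    have hne : (1 + Real.exp (-2 * β * (T - t))) ≠ 0 := by positivity
    rw [show -4 * β * c * Real.exp (-2 * β * (T - t)) / (1 + Real.exp (-2 * β * (T - t))) ^ 2
        = -4 * (β * c) * Real.exp (-2 * β * (T - t)) / (1 + Real.exp (-2 * β * (T - t))) ^ 2
        by ring, hβc]
    rw [show (c * (1 - Real.exp (-2 * β * (T - t))) / (1 + Real.exp (-2 * β * (T - t)))) ^ 2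
        = c ^ 2 * ((1 - Real.exp (-2 * β * (T - t))) / (1 + Real.exp (-2 * β * (T - t)))) ^ 2
        by ring, hc2]
    field_simp
    ring
end

section
/- Let k > 0 and T > 0. For each integer N ≥ 2 define a^N : [0, T] → ℝ by a^N(t) = √( (k/2)·(N−1)²/(N(N+1)) ) · (1 − e^{−2√(2(N+1)k/N)(T−t)})/(1 + e^{−2√(2(N+1)k/N)(T−t)}), and define a : [0, T] → ℝ by a(t) = √(k/2) · (1 − e^{−2√(2k)(T−t)})/(1 + e^{−2√(2k)(T−t)}). Then there exists a constant C > 0 (depending only on k and T) such that |a^N(t) − a(t)| ≤ C/N for all integers N ≥ 2 and all t ∈ [0, T]. -/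
private lemma exp_le_one' {x : ℝ} (h : x ≤ 0) : Real.exp x ≤ 1 := by
  calc Real.exp x ≤ Real.exp 0 := Real.exp_le_exp.2 h
    _ = 1 := Real.exp_zero

private lemma exp_neg_lip (x y : ℝ) (hx : 0 ≤ x) (hy : 0 ≤ y) :
    |Real.exp (-x) - Real.exp (-y)| ≤ |x - y| := by
  wlog h : y ≤ x generalizing x y
  · rw [abs_sub_comm, abs_sub_comm x y]; exact this y x hy hx (le_of_not_ge h)
  have h1 : Real.exp (-x) ≤ Real.exp (-y) := Real.exp_le_exp.2 (by linarith)
  rw [abs_of_nonpos (by linarith), abs_of_nonneg (by linarith)]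
  have h2 : Real.exp (-x) = Real.exp (-y) * Real.exp (-(x - y)) := by
    rw [← Real.exp_add]; ring_nf
  have h3 : -(x - y) + 1 ≤ Real.exp (-(x - y)) := Real.add_one_le_exp _
  have h4 : Real.exp (-y) ≤ 1 := exp_le_one' (by linarith)
  nlinarith [Real.exp_pos (-(x - y)), Real.exp_pos (-y)]

private lemma tanh_lip (x y : ℝ) (hx : 0 ≤ x) (hy : 0 ≤ y) :
    |(1 - Real.exp (-x)) / (1 + Real.exp (-x)) -
     (1 - Real.exp (-y)) / (1 + Real.exp (-y))| ≤ 2 * |x - y| := by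
  set u := Real.exp (-x) with hu
  set v := Real.exp (-y) with hv
  have hu0 : 0 < u := Real.exp_pos _
  have hv0 : 0 < v := Real.exp_pos _
  have hdiff : (1 - u) / (1 + u) - (1 - v) / (1 + v)
      = 2 * (v - u) / ((1 + u) * (1 + v)) := by
    field_simp
    ring
  have hden : (0 : ℝ) < (1 + u) * (1 + v) := by positivity
  have hden1 : (1 : ℝ) ≤ (1 + u) * (1 + v) := by nlinarith
  have huv : |v - u| ≤ |x - y| := by
    rw [abs_sub_comm]
    exact exp_neg_lip x y hx hy
  rw [hdiff, abs_div, abs_of_pos hden, abs_mul, abs_two]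
  calc 2 * |v - u| / ((1 + u) * (1 + v)) ≤ 2 * |v - u| :=
        div_le_self (by positivity) hden1
    _ ≤ 2 * |x - y| := by linarith

private lemma key_est (b bN l lN s T n : ℝ)
    (hb0 : 0 < b) (hl0 : 0 ≤ l) (hlN0 : 0 ≤ lN)
    (hs0 : 0 ≤ s) (hsT : s ≤ T) (hn0 : 0 < n)
    (habN : |bN - b| ≤ 2 * (b / n)) (hlNge : l ≤ lN) (hlNle : lN ≤ l + l / n) :
    |bN * (1 - Real.exp (-2 * lN * s)) / (1 + Real.exp (-2 * lN * s))
      - b * (1 - Real.exp (-2 * l * s)) / (1 + Real.exp (-2 * l * s))|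
      ≤ (2 * b + 4 * b * l * T + 1) / n := by
  have hT0 : 0 ≤ T := le_trans hs0 hsT
  have hxx : 2 * lN * s - 2 * l * s ≤ 2 * (T * l / n) := by
    have h2 : 0 ≤ l / n - (lN - l) := by linarith
    have hA := mul_nonneg hT0 h2
    have hidA : T * (l / n - (lN - l)) = T * l / n - T * lN + T * l := by ring
    have hB := mul_nonneg (sub_nonneg.2 hsT) (sub_nonneg.2 hlNge)
    have hidB : (T - s) * (lN - l) = T * lN - T * l - s * lN + s * l := by ring
    linarith [hA, hidA, hB, hidB]
  have hxx0 : 0 ≤ 2 * lN * s - 2 * l * s := by nlinarith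
  have e1 : -2 * lN * s = -(2 * lN * s) := by ring
  have e2 : -2 * l * s = -(2 * l * s) := by ring
  rw [e1, e2]
  set u : ℝ := Real.exp (-(2 * lN * s)) with hu_def
  set v : ℝ := Real.exp (-(2 * l * s)) with hv_def
  have hu0 : 0 < u := Real.exp_pos _
  have hv0 : 0 < v := Real.exp_pos _
  have hu1 : u ≤ 1 := exp_le_one' (neg_nonpos.2 (by positivity))
  have hv1 : v ≤ 1 := exp_le_one' (neg_nonpos.2 (by positivity))
  have hgN_abs : |(1 - u) / (1 + u)| ≤ 1 := by
    rw [abs_div, abs_of_pos (by linarith : (0:ℝ) < 1 + u), div_le_one (by linarith)]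
    rw [abs_le]
    constructor <;> linarith
  have hgdiff : |(1 - u) / (1 + u) - (1 - v) / (1 + v)| ≤ 2 * (2 * (T * l / n)) := by
    have h1 := tanh_lip (2 * lN * s) (2 * l * s) (by positivity) (by positivity)
    have h2 : |2 * lN * s - 2 * l * s| = 2 * lN * s - 2 * l * s := abs_of_nonneg hxx0
    calc |(1 - u) / (1 + u) - (1 - v) / (1 + v)| ≤ 2 * |2 * lN * s - 2 * l * s| := h1
      _ ≤ 2 * (2 * (T * l / n)) := by rw [h2]; linarith
  rw [mul_div_assoc, mul_div_assoc]
  calc |bN * ((1 - u) / (1 + u)) - b * ((1 - v) / (1 + v))|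
      = |(bN - b) * ((1 - u) / (1 + u)) + b * ((1 - u) / (1 + u) - (1 - v) / (1 + v))| := by
        ring_nf
    _ ≤ |(bN - b) * ((1 - u) / (1 + u))| + |b * ((1 - u) / (1 + u) - (1 - v) / (1 + v))| :=
        abs_add_le _ _
    _ = |bN - b| * |(1 - u) / (1 + u)| + b * |(1 - u) / (1 + u) - (1 - v) / (1 + v)| := by
        rw [abs_mul, abs_mul, abs_of_pos hb0]
    _ ≤ (2 * (b / n)) * 1 + b * (2 * (2 * (T * l / n))) := by
        apply add_le_add
        · exact mul_le_mul habN hgN_abs (abs_nonneg _) (by positivity)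
        · exact mul_le_mul_of_nonneg_left hgdiff hb0.le
    _ = (2 * b + 4 * b * l * T) / n := by field_simp; ring
    _ ≤ (2 * b + 4 * b * l * T + 1) / n := by
        rw [div_le_div_iff₀ hn0 hn0]
        nlinarith

/-- For `k, T > 0`, let `a^N` be the `N`-player Riccati solution and `a` the mean-field
Riccati solution (given by their explicit formulas). Then there is a constant `C > 0`,
depending only on `k` and `T`, such that `|a^N(t) − a(t)| ≤ C/N` for all integers `N ≥ 2`
and all `t ∈ [0, T]`. -/
theorem stmt15 (k T : ℝ) (hk : 0 < k) (hT : 0 < T)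
    (aN : ℕ → ℝ → ℝ) (a : ℝ → ℝ)
    (haN : ∀ N : ℕ, 2 ≤ N → ∀ t,
      aN N t = Real.sqrt ((k / 2) * ((N : ℝ) - 1) ^ 2 / ((N : ℝ) * ((N : ℝ) + 1)))
        * (1 - Real.exp (-2 * Real.sqrt (2 * ((N : ℝ) + 1) * k / (N : ℝ)) * (T - t)))
        / (1 + Real.exp (-2 * Real.sqrt (2 * ((N : ℝ) + 1) * k / (N : ℝ)) * (T - t))))
    (ha : ∀ t, a t = Real.sqrt (k / 2)
      * (1 - Real.exp (-2 * Real.sqrt (2 * k) * (T - t)))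
      / (1 + Real.exp (-2 * Real.sqrt (2 * k) * (T - t)))) :
    ∃ C > 0, ∀ N : ℕ, 2 ≤ N → ∀ t ∈ Set.Icc (0 : ℝ) T,
      |aN N t - a t| ≤ C / (N : ℝ) := by
  refine ⟨2 * Real.sqrt (k / 2) + 4 * Real.sqrt (k / 2) * Real.sqrt (2 * k) * T + 1,
    by positivity, ?_⟩
  intro N hN t ht
  rw [haN N hN t, ha t]
  obtain ⟨ht0, htT⟩ := ht
  have hn : (2 : ℝ) ≤ (N : ℝ) := by exact_mod_cast hN
  set n : ℝ := (N : ℝ)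
  have hn0 : (0 : ℝ) < n := by linarith
  have hb0 : 0 < Real.sqrt (k / 2) := Real.sqrt_pos.2 (by linarith)
  have hl0 : 0 < Real.sqrt (2 * k) := Real.sqrt_pos.2 (by linarith)
  have hq0 : (0 : ℝ) ≤ 1 - 2 / n := by
    rw [sub_nonneg, div_le_one hn0]; linarith
  have hbNb : Real.sqrt (k / 2 * (n - 1) ^ 2 / (n * (n + 1))) ≤ Real.sqrt (k / 2) := by
    apply Real.sqrt_le_sqrt
    rw [div_le_iff₀ (by positivity)]
    nlinarith
  have hbN_lower : Real.sqrt (k / 2) * (1 - 2 / n)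
      ≤ Real.sqrt (k / 2 * (n - 1) ^ 2 / (n * (n + 1))) := by
    have heq : Real.sqrt (k / 2 * (1 - 2 / n) ^ 2) = Real.sqrt (k / 2) * (1 - 2 / n) := by
      rw [Real.sqrt_mul (by positivity), Real.sqrt_sq hq0]
    rw [← heq]
    apply Real.sqrt_le_sqrt
    rw [le_div_iff₀ (by positivity)]
    have key : (1 - 2 / n) ^ 2 * (n * (n + 1)) ≤ (n - 1) ^ 2 := by
      have h1 : (1 - 2 / n) ^ 2 * (n * (n + 1)) = (n - 2) ^ 2 * (n + 1) / n := by
        field_simp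
      rw [h1, div_le_iff₀ hn0]
      nlinarith [sq_nonneg (n - 2)]
    have h2 := mul_le_mul_of_nonneg_left key (show (0:ℝ) ≤ k / 2 by linarith)
    linarith [h2]
  have habN : |Real.sqrt (k / 2 * (n - 1) ^ 2 / (n * (n + 1))) - Real.sqrt (k / 2)|
      ≤ 2 * (Real.sqrt (k / 2) / n) := by
    rw [abs_le]
    constructor
    · have h1 : Real.sqrt (k / 2) * (1 - 2 / n)
          = Real.sqrt (k / 2) - 2 * (Real.sqrt (k / 2) / n) := by ring
      linarith [hbN_lower, h1]
    · have h1 : 0 < 2 * (Real.sqrt (k / 2) / n) := by positivity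
      linarith
  have hlNge : Real.sqrt (2 * k) ≤ Real.sqrt (2 * (n + 1) * k / n) := by
    apply Real.sqrt_le_sqrt
    rw [le_div_iff₀ hn0]
    nlinarith
  have hlNle : Real.sqrt (2 * (n + 1) * k / n) ≤ Real.sqrt (2 * k) + Real.sqrt (2 * k) / n := by
    have heq : Real.sqrt (2 * k * (1 + 1 / n) ^ 2) = Real.sqrt (2 * k) * (1 + 1 / n) := by
      rw [Real.sqrt_mul (by positivity), Real.sqrt_sq (by positivity)]
    have h3 : Real.sqrt (2 * (n + 1) * k / n) ≤ Real.sqrt (2 * k) * (1 + 1 / n) := by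
      rw [← heq]
      apply Real.sqrt_le_sqrt
      have h1 : 2 * (n + 1) * k / n = 2 * k * (1 + 1 / n) := by field_simp
      rw [h1]
      nlinarith [sq_nonneg (1 / n), one_div_pos.2 hn0]
    have h4 : Real.sqrt (2 * k) * (1 + 1 / n) = Real.sqrt (2 * k) + Real.sqrt (2 * k) / n := by
      ring
    linarith [h3, h4]
  exact key_est (Real.sqrt (k / 2)) (Real.sqrt (k / 2 * (n - 1) ^ 2 / (n * (n + 1))))
    (Real.sqrt (2 * k)) (Real.sqrt (2 * (n + 1) * k / n)) (T - t) T n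
    hb0 hl0.le (Real.sqrt_nonneg _) (by linarith) (by linarith) hn0 habN hlNge hlNle
end

section
/- Let k > 0, T > 0, and let N ≥ 3 be an integer. Let a₁, a₂ : [0, T] → ℝ be differentiable functions satisfying a₁′ − (2(N+1)/(N−1))·a₁² + ((N−1)/N)·k = 0 and a₂′ + (2/(N−1)²)·a₁² − (4N/(N−1))·a₁·a₂ + k/N = 0 on [0, T] with a₁(T) = a₂(T) = 0. Set a₃ = −a₁/(N−1) and a₄ = a₁/((N−1)(N−2)) − a₂/(N−2). For each i ∈ {1, …, N} define the symmetric N×N real matrix-valued function A_i on [0, T] with entries (A_i(t))_{pq} = a₁(t) if p = q = i; a₂(t) if p = q ≠ i; a₃(t) if p ≠ q and (p = i or q = i); and a₄(t) otherwise. Then, for every i and every t ∈ [0, T], A_i′(t) − 2·A_i(t)ᵀ·e_i·e_iᵀ·A_i(t) − 4·∑_{j ≠ i} A_j(t)ᵀ·e_j·e_jᵀ·A_i(t) + (k/N)·∑_{j ≠ i} (e_i − e_j)·(e_i − e_j)ᵀ = 0, and A_i(T) = 0. -/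
open Matrix

private lemma entry_lem {n : ℕ} (A B : Matrix (Fin n) (Fin n) ℝ) (i p q : Fin n) :
    ((Aᵀ * vecMulVec (Pi.single i 1) (Pi.single i 1) * B) : Matrix (Fin n) (Fin n) ℝ) p q = A i p * B i q := by
  simp [Matrix.mul_apply, Matrix.vecMulVec_apply, Pi.single_apply, Finset.sum_mul,
    Finset.mul_sum, ite_mul, mul_ite]

private lemma sum_one_pt {n : ℕ} (s : Finset (Fin n)) (r : Fin n) (hr : r ∈ s) (x y : ℝ) :
    ∑ j ∈ s, (if j = r then x else y) = x + ((s.card : ℝ) - 1) * y := by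
  have h : ∀ j ∈ s, (if j = r then x else y) = y + (if j = r then x - y else 0) := by
    intro j _; split <;> ring
  rw [Finset.sum_congr rfl h, Finset.sum_add_distrib, Finset.sum_const,
    Finset.sum_ite_eq' s r fun _ => x - y, if_pos hr, nsmul_eq_mul]
  ring

private lemma sum_two_pt {n : ℕ} (s : Finset (Fin n)) (p q : Fin n) (hp : p ∈ s) (hq : q ∈ s)
    (hpq : p ≠ q) (x y z w : ℝ) :
    ∑ j ∈ s, (if j = p then x else y) * (if j = q then z else w)
      = x * w + y * z + ((s.card : ℝ) - 2) * (y * w) := by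
  have h : ∀ j ∈ s, (if j = p then x else y) * (if j = q then z else w)
      = y * w + ((if j = p then x * w - y * w else 0) + (if j = q then y * z - y * w else 0)) := by
    intro j _
    rcases eq_or_ne j p with h1 | h1 <;> rcases eq_or_ne j q with h2 | h2
    · exact absurd (h1 ▸ h2) hpq
    · simp [h1, h2, hpq, Ne.symm hpq]
    · simp [h1, h2, hpq, Ne.symm hpq]
    · simp [h1, h2]
  rw [Finset.sum_congr rfl h, Finset.sum_add_distrib, Finset.sum_const, Finset.sum_add_distrib,
    Finset.sum_ite_eq' s p fun _ => x * w - y * w, Finset.sum_ite_eq' s q fun _ => y * z - y * w,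
    if_pos hp, if_pos hq, nsmul_eq_mul]
  ring


set_option maxHeartbeats 1000000 in
/-- For `k, T > 0` and an integer `N ≥ 3`, let `a₁, a₂` solve the reduced Riccati system
`a₁′ − (2(N+1)/(N−1))a₁² + ((N−1)/N)k = 0`,
`a₂′ + (2/(N−1)²)a₁² − (4N/(N−1))a₁a₂ + k/N = 0` on `[0, T]` with `a₁(T) = a₂(T) = 0`,
set `a₃ = −a₁/(N−1)`, `a₄ = a₁/((N−1)(N−2)) − a₂/(N−2)`, and let `A_i` be the symmetric
matrix-valued function built from the pattern `(a₁, a₂, a₃, a₄)`. Then each `A_i` solves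
(entrywise) the full `N`-player Riccati matrix equation
`A_i′ − 2A_iᵀe_ie_iᵀA_i − 4∑_{j≠i} A_jᵀe_je_jᵀA_i + (k/N)∑_{j≠i}(e_i−e_j)(e_i−e_j)ᵀ = 0`
with `A_i(T) = 0`. -/
theorem stmt16 (k T : ℝ) (hk : 0 < k) (hT : 0 < T) (N : ℕ) (hN : 3 ≤ N)
    (a₁ a₂ : ℝ → ℝ)
    (h₁ : ∀ t ∈ Set.Icc (0 : ℝ) T,
      HasDerivWithinAt a₁
        ((2 * ((N : ℝ) + 1) / ((N : ℝ) - 1)) * a₁ t ^ 2 - (((N : ℝ) - 1) / (N : ℝ)) * k)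
        (Set.Icc 0 T) t)
    (h₂ : ∀ t ∈ Set.Icc (0 : ℝ) T,
      HasDerivWithinAt a₂
        (-(2 / ((N : ℝ) - 1) ^ 2) * a₁ t ^ 2 + (4 * (N : ℝ) / ((N : ℝ) - 1)) * a₁ t * a₂ t
          - k / (N : ℝ))
        (Set.Icc 0 T) t)
    (h₁T : a₁ T = 0) (h₂T : a₂ T = 0)
    (a₃ a₄ : ℝ → ℝ)
    (h₃ : ∀ t, a₃ t = -(a₁ t) / ((N : ℝ) - 1))
    (h₄ : ∀ t, a₄ t = a₁ t / (((N : ℝ) - 1) * ((N : ℝ) - 2)) - a₂ t / ((N : ℝ) - 2))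
    (A : Fin N → ℝ → Matrix (Fin N) (Fin N) ℝ)
    (hA : ∀ i t p q, A i t p q =
      if p = i ∧ q = i then a₁ t
      else if p = q then a₂ t
      else if p = i ∨ q = i then a₃ t
      else a₄ t) :
    ∀ i : Fin N,
      (∀ t ∈ Set.Icc (0 : ℝ) T, ∀ p q : Fin N,
        HasDerivWithinAt (fun s => A i s p q)
          ((((2 : ℝ) • ((A i t)ᵀ * vecMulVec (Pi.single i 1) (Pi.single i 1) * A i t)
            + (4 : ℝ) • (∑ j ∈ Finset.univ.erase i,
                (A j t)ᵀ * vecMulVec (Pi.single j 1) (Pi.single j 1) * A i t)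
            - (k / (N : ℝ)) • ∑ j ∈ Finset.univ.erase i,
                vecMulVec ((Pi.single i 1 : Fin N → ℝ) - Pi.single j 1)
                  ((Pi.single i 1 : Fin N → ℝ) - Pi.single j 1) :
              Matrix (Fin N) (Fin N) ℝ)) p q)
          (Set.Icc 0 T) t)
      ∧ A i T = 0 := by
  have hNR : (3:ℝ) ≤ (N:ℝ) := by exact_mod_cast hN
  have hN0 : (N:ℝ) ≠ 0 := by linarith
  have hN1 : (N:ℝ) - 1 ≠ 0 := by linarith
  have hN2 : (N:ℝ) - 2 ≠ 0 := by linarith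
  have ha3 : a₃ = fun t => -(a₁ t) / ((N:ℝ) - 1) := funext h₃
  have ha4 : a₄ = fun t => a₁ t / (((N:ℝ) - 1) * ((N:ℝ) - 2)) - a₂ t / ((N:ℝ) - 2) := funext h₄
  intro i
  have card_e : ((Finset.univ.erase i).card : ℝ) = (N:ℝ) - 1 := by
    rw [Finset.card_erase_of_mem (Finset.mem_univ i), Finset.card_univ, Fintype.card_fin,
      Nat.cast_sub (by omega)]
    simp
  constructor
  · intro t ht p q
    have hd1 := h₁ t ht
    have hd2 := h₂ t ht
    have hd3 : HasDerivWithinAt a₃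
        (-(2 * ((N:ℝ)+1) / ((N:ℝ)-1) * a₁ t ^ 2 - ((N:ℝ)-1)/(N:ℝ) * k) / ((N:ℝ)-1))
        (Set.Icc 0 T) t := by
      rw [ha3]; exact hd1.neg.div_const _
    have hd4 : HasDerivWithinAt a₄
        ((2 * ((N:ℝ)+1) / ((N:ℝ)-1) * a₁ t ^ 2 - ((N:ℝ)-1)/(N:ℝ) * k) / (((N:ℝ)-1)*((N:ℝ)-2))
          - (-(2/((N:ℝ)-1)^2) * a₁ t ^ 2 + 4*(N:ℝ)/((N:ℝ)-1) * a₁ t * a₂ t - k/(N:ℝ))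
            / ((N:ℝ)-2))
        (Set.Icc 0 T) t := by
      rw [ha4]; exact (hd1.div_const _).sub (hd2.div_const _)
    simp only [Matrix.sub_apply, Matrix.add_apply, Matrix.smul_apply, Matrix.sum_apply,
      entry_lem, Matrix.vecMulVec_apply, Pi.sub_apply, smul_eq_mul]
    by_cases hp : p = i
    · by_cases hq : q = i
      · -- case p = i, q = i
        have hfun : (fun s => A i s p q) = a₁ := funext fun s => by rw [hA]; simp [hp, hq]
        have e1 : A i t i p = a₁ t := by rw [hA]; simp [hp]
        have e2 : A i t i q = a₁ t := by rw [hA]; simp [hq]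
        have s1 : ∑ j ∈ Finset.univ.erase i, A j t j p * A i t j q
            = ((N:ℝ)-1) * (a₃ t * a₃ t) := by
          have h' : ∀ j ∈ Finset.univ.erase i, A j t j p * A i t j q = a₃ t * a₃ t := by
            intro j hj
            have hji : j ≠ i := Finset.ne_of_mem_erase hj
            rw [hA, hA]
            simp [hp, hq, hji, Ne.symm hji]
          rw [Finset.sum_congr rfl h', Finset.sum_const, nsmul_eq_mul, card_e]
        have s2 : ∑ j ∈ Finset.univ.erase i,
            ((Pi.single i 1 : Fin N → ℝ) p - (Pi.single j 1 : Fin N → ℝ) p) * ((Pi.single i 1 : Fin N → ℝ) q - (Pi.single j 1 : Fin N → ℝ) q)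
            = (N:ℝ) - 1 := by
          have h' : ∀ j ∈ Finset.univ.erase i,
              ((Pi.single i 1 : Fin N → ℝ) p - (Pi.single j 1 : Fin N → ℝ) p) * ((Pi.single i 1 : Fin N → ℝ) q - (Pi.single j 1 : Fin N → ℝ) q)
                = (1:ℝ) := by
            intro j hj
            have hji : j ≠ i := Finset.ne_of_mem_erase hj
            simp [Pi.single_apply, hp, hq, hji, Ne.symm hji]
          rw [Finset.sum_congr rfl h', Finset.sum_const, nsmul_eq_mul, card_e, mul_one]
        rw [hfun, e1, e2, s1, s2,
          show 2 * (a₁ t * a₁ t) + 4 * (((N:ℝ)-1) * (a₃ t * a₃ t)) - k/(N:ℝ) * ((N:ℝ)-1)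
            = 2 * ((N:ℝ)+1) / ((N:ℝ)-1) * a₁ t ^ 2 - ((N:ℝ)-1)/(N:ℝ) * k by
              rw [h₃ t]; field_simp; ring]
        exact hd1
      · -- case p = i, q ≠ i
        have hqi : q ∈ Finset.univ.erase i := Finset.mem_erase.mpr ⟨hq, Finset.mem_univ q⟩
        have hfun : (fun s => A i s p q) = a₃ := funext fun s => by
          rw [hA]; simp [hp, hq, Ne.symm hq]
        have e1 : A i t i p = a₁ t := by rw [hA]; simp [hp]
        have e2 : A i t i q = a₃ t := by rw [hA]; simp [hq, Ne.symm hq]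
        have s1 : ∑ j ∈ Finset.univ.erase i, A j t j p * A i t j q
            = a₃ t * a₂ t + ((N:ℝ)-2) * (a₃ t * a₄ t) := by
          have h' : ∀ j ∈ Finset.univ.erase i, A j t j p * A i t j q
              = if j = q then a₃ t * a₂ t else a₃ t * a₄ t := by
            intro j hj
            have hji : j ≠ i := Finset.ne_of_mem_erase hj
            rw [hA, hA]
            rcases eq_or_ne j q with rfl | hjq
            · simp [hp, hq, Ne.symm hq, hji, Ne.symm hji]
            · simp [hp, hq, Ne.symm hq, hji, Ne.symm hji, hjq, hjq.symm]
          rw [Finset.sum_congr rfl h', sum_one_pt _ q hqi, card_e]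
          ring
        have s2 : ∑ j ∈ Finset.univ.erase i,
            ((Pi.single i 1 : Fin N → ℝ) p - (Pi.single j 1 : Fin N → ℝ) p) * ((Pi.single i 1 : Fin N → ℝ) q - (Pi.single j 1 : Fin N → ℝ) q)
            = (-1 : ℝ) := by
          have h' : ∀ j ∈ Finset.univ.erase i,
              ((Pi.single i 1 : Fin N → ℝ) p - (Pi.single j 1 : Fin N → ℝ) p) * ((Pi.single i 1 : Fin N → ℝ) q - (Pi.single j 1 : Fin N → ℝ) q)
                = if j = q then (-1:ℝ) else 0 := by
            intro j hj
            have hji : j ≠ i := Finset.ne_of_mem_erase hj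
            rcases eq_or_ne j q with rfl | hjq
            · simp [Pi.single_apply, hp, hq, Ne.symm hq, hji, Ne.symm hji]
            · simp [Pi.single_apply, hp, hq, Ne.symm hq, hji, Ne.symm hji, hjq, hjq.symm]
          rw [Finset.sum_congr rfl h', sum_one_pt _ q hqi, card_e]
          ring
        rw [hfun, e1, e2, s1, s2,
          show 2 * (a₁ t * a₃ t) + 4 * (a₃ t * a₂ t + ((N:ℝ)-2) * (a₃ t * a₄ t))
              - k/(N:ℝ) * (-1)
            = -(2 * ((N:ℝ)+1) / ((N:ℝ)-1) * a₁ t ^ 2 - ((N:ℝ)-1)/(N:ℝ) * k) / ((N:ℝ)-1) by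
              rw [h₃ t, h₄ t]; field_simp; ring]
        exact hd3
    · by_cases hq : q = i
      · -- case p ≠ i, q = i
        have hpi : p ∈ Finset.univ.erase i := Finset.mem_erase.mpr ⟨hp, Finset.mem_univ p⟩
        have hfun : (fun s => A i s p q) = a₃ := funext fun s => by
          rw [hA]; simp [hp, hq, Ne.symm hp]
        have e1 : A i t i p = a₃ t := by rw [hA]; simp [hp, Ne.symm hp]
        have e2 : A i t i q = a₁ t := by rw [hA]; simp [hq]
        have s1 : ∑ j ∈ Finset.univ.erase i, A j t j p * A i t j q
            = a₁ t * a₃ t + ((N:ℝ)-2) * (a₃ t * a₃ t) := by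
          have h' : ∀ j ∈ Finset.univ.erase i, A j t j p * A i t j q
              = if j = p then a₁ t * a₃ t else a₃ t * a₃ t := by
            intro j hj
            have hji : j ≠ i := Finset.ne_of_mem_erase hj
            rw [hA, hA]
            rcases eq_or_ne j p with rfl | hjp
            · simp [hp, hq, Ne.symm hp, hji, Ne.symm hji]
            · simp [hp, hq, Ne.symm hp, hji, Ne.symm hji, hjp, hjp.symm]
          rw [Finset.sum_congr rfl h', sum_one_pt _ p hpi, card_e]
          ring
        have s2 : ∑ j ∈ Finset.univ.erase i,
            ((Pi.single i 1 : Fin N → ℝ) p - (Pi.single j 1 : Fin N → ℝ) p) * ((Pi.single i 1 : Fin N → ℝ) q - (Pi.single j 1 : Fin N → ℝ) q)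
            = (-1 : ℝ) := by
          have h' : ∀ j ∈ Finset.univ.erase i,
              ((Pi.single i 1 : Fin N → ℝ) p - (Pi.single j 1 : Fin N → ℝ) p) * ((Pi.single i 1 : Fin N → ℝ) q - (Pi.single j 1 : Fin N → ℝ) q)
                = if j = p then (-1:ℝ) else 0 := by
            intro j hj
            have hji : j ≠ i := Finset.ne_of_mem_erase hj
            rcases eq_or_ne j p with rfl | hjp
            · simp [Pi.single_apply, hp, hq, Ne.symm hp, hji, Ne.symm hji]
            · simp [Pi.single_apply, hp, hq, Ne.symm hp, hji, Ne.symm hji, hjp, hjp.symm]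
          rw [Finset.sum_congr rfl h', sum_one_pt _ p hpi, card_e]
          ring
        rw [hfun, e1, e2, s1, s2,
          show 2 * (a₃ t * a₁ t) + 4 * (a₁ t * a₃ t + ((N:ℝ)-2) * (a₃ t * a₃ t))
              - k/(N:ℝ) * (-1)
            = -(2 * ((N:ℝ)+1) / ((N:ℝ)-1) * a₁ t ^ 2 - ((N:ℝ)-1)/(N:ℝ) * k) / ((N:ℝ)-1) by
              rw [h₃ t]; field_simp; ring]
        exact hd3
      · by_cases hpq : p = q
        · -- case p = q ≠ i
          have hpi : p ∈ Finset.univ.erase i := Finset.mem_erase.mpr ⟨hp, Finset.mem_univ p⟩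
          have hfun : (fun s => A i s p q) = a₂ := funext fun s => by
            rw [hA]; simp [hp, hq, hpq]
          have e1 : A i t i p = a₃ t := by rw [hA]; simp [hp, Ne.symm hp]
          have e2 : A i t i q = a₃ t := by rw [hA]; simp [hq, Ne.symm hq]
          have s1 : ∑ j ∈ Finset.univ.erase i, A j t j p * A i t j q
              = a₁ t * a₂ t + ((N:ℝ)-2) * (a₃ t * a₄ t) := by
            have h' : ∀ j ∈ Finset.univ.erase i, A j t j p * A i t j q
                = if j = p then a₁ t * a₂ t else a₃ t * a₄ t := by
              intro j hj
              have hji : j ≠ i := Finset.ne_of_mem_erase hj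
              rw [hA, hA]
              rcases eq_or_ne j p with rfl | hjp
              · simp [hp, hq, hpq, Ne.symm hp, Ne.symm hq, hji, Ne.symm hji]
              · have hjq : j ≠ q := fun h => hjp (h.trans hpq.symm)
                simp [hp, hq, hpq, Ne.symm hp, Ne.symm hq, hji, Ne.symm hji, hjp, hjp.symm, hjq, hjq.symm]
            rw [Finset.sum_congr rfl h', sum_one_pt _ p hpi, card_e]
            ring
          have s2 : ∑ j ∈ Finset.univ.erase i,
              ((Pi.single i 1 : Fin N → ℝ) p - (Pi.single j 1 : Fin N → ℝ) p) * ((Pi.single i 1 : Fin N → ℝ) q - (Pi.single j 1 : Fin N → ℝ) q)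
              = (1 : ℝ) := by
            have h' : ∀ j ∈ Finset.univ.erase i,
                ((Pi.single i 1 : Fin N → ℝ) p - (Pi.single j 1 : Fin N → ℝ) p) * ((Pi.single i 1 : Fin N → ℝ) q - (Pi.single j 1 : Fin N → ℝ) q)
                  = if j = p then (1:ℝ) else 0 := by
              intro j hj
              have hji : j ≠ i := Finset.ne_of_mem_erase hj
              rcases eq_or_ne j p with rfl | hjp
              · simp [Pi.single_apply, hp, hq, hpq, Ne.symm hp, Ne.symm hq, hji, Ne.symm hji]
              · have hjq : j ≠ q := fun h => hjp (h.trans hpq.symm)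
                simp [Pi.single_apply, hp, hq, hpq, Ne.symm hp, Ne.symm hq, hji, Ne.symm hji, hjp, hjp.symm, hjq, hjq.symm]
            rw [Finset.sum_congr rfl h', sum_one_pt _ p hpi, card_e]
            ring
          rw [hfun, e1, e2, s1, s2,
            show 2 * (a₃ t * a₃ t) + 4 * (a₁ t * a₂ t + ((N:ℝ)-2) * (a₃ t * a₄ t))
                - k/(N:ℝ) * 1
              = -(2/((N:ℝ)-1)^2) * a₁ t ^ 2 + 4*(N:ℝ)/((N:ℝ)-1) * a₁ t * a₂ t - k/(N:ℝ) by
                rw [h₃ t, h₄ t]; field_simp; ring]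
          exact hd2
        · -- case p ≠ q, both ≠ i
          have hpi : p ∈ Finset.univ.erase i := Finset.mem_erase.mpr ⟨hp, Finset.mem_univ p⟩
          have hqi : q ∈ Finset.univ.erase i := Finset.mem_erase.mpr ⟨hq, Finset.mem_univ q⟩
          have hfun : (fun s => A i s p q) = a₄ := funext fun s => by
            rw [hA]; simp [hp, hq, hpq]
          have e1 : A i t i p = a₃ t := by rw [hA]; simp [hp, Ne.symm hp]
          have e2 : A i t i q = a₃ t := by rw [hA]; simp [hq, Ne.symm hq]
          have s1 : ∑ j ∈ Finset.univ.erase i, A j t j p * A i t j q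
              = a₁ t * a₄ t + a₃ t * a₂ t + ((N:ℝ)-3) * (a₃ t * a₄ t) := by
            have h' : ∀ j ∈ Finset.univ.erase i, A j t j p * A i t j q
                = (if j = p then a₁ t else a₃ t) * (if j = q then a₂ t else a₄ t) := by
              intro j hj
              have hji : j ≠ i := Finset.ne_of_mem_erase hj
              rw [hA, hA]
              rcases eq_or_ne j p with rfl | hjp
              · simp [hp, hq, hpq, Ne.symm hp, Ne.symm hq, hji, Ne.symm hji, hpq, Ne.symm hpq]
              · rcases eq_or_ne j q with rfl | hjq
                · simp [hp, hq, hpq, Ne.symm hp, Ne.symm hq, hji, Ne.symm hji, hjp, hjp.symm]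
                · simp [hp, hq, hpq, Ne.symm hp, Ne.symm hq, hji, Ne.symm hji, hjp, hjp.symm, hjq, hjq.symm]
            rw [Finset.sum_congr rfl h', sum_two_pt _ p q hpi hqi hpq, card_e]
            ring
          have s2 : ∑ j ∈ Finset.univ.erase i,
              ((Pi.single i 1 : Fin N → ℝ) p - (Pi.single j 1 : Fin N → ℝ) p) * ((Pi.single i 1 : Fin N → ℝ) q - (Pi.single j 1 : Fin N → ℝ) q)
              = (0 : ℝ) := by
            refine Finset.sum_eq_zero fun j hj => ?_
            have hji : j ≠ i := Finset.ne_of_mem_erase hj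
            rcases eq_or_ne j p with rfl | hjp
            · simp [Pi.single_apply, hp, hq, hpq, Ne.symm hp, Ne.symm hq, hji, Ne.symm hji]
            · simp [Pi.single_apply, hp, hq, hpq, Ne.symm hp, Ne.symm hq, hji, Ne.symm hji, hjp, hjp.symm]
          rw [hfun, e1, e2, s1, s2,
            show 2 * (a₃ t * a₃ t)
                + 4 * (a₁ t * a₄ t + a₃ t * a₂ t + ((N:ℝ)-3) * (a₃ t * a₄ t))
                - k/(N:ℝ) * 0
              = (2 * ((N:ℝ)+1) / ((N:ℝ)-1) * a₁ t ^ 2 - ((N:ℝ)-1)/(N:ℝ) * k)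
                  / (((N:ℝ)-1)*((N:ℝ)-2))
                - (-(2/((N:ℝ)-1)^2) * a₁ t ^ 2 + 4*(N:ℝ)/((N:ℝ)-1) * a₁ t * a₂ t - k/(N:ℝ))
                  / ((N:ℝ)-2) by
                rw [h₃ t, h₄ t]; field_simp; ring]
          exact hd4
  · ext p q
    rw [hA]
    split_ifs <;> simp [h₁T, h₂T, h₃, h₄]
end
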